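/- arXiv:1210.5561 — 2 statements merged into one kernel-verified Lean document; each statement's English description precedes it below -/
import Mathlib

section
/- Define the h-Fibonacci sequence by F^(h)_n = 1 for 1 ≤ n ≤ h+1 and F^(h)_n = F^(h)_{n-1} + F^(h)_{n-h-1} for n > h+1. Then the number of edges of the Hasse diagram of the independent subsets of the h-th power of a path on n vertices, ordered by inclusion, equals the convolution sum Σ_{i=1}^{n} F^(h)_i * F^(h)_{n-i+1}. -/
/-! Count the edges of the Hasse diagram by their upper end: a set `T` covers exactly `#T` sets,
all independent again, so the edge count is `E n = ∑ T, #T`. An independent `T ⊆ [m + 1]`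
either avoids `m + 1`, or is `insert (m + 1) S` with `S` independent in `[m - h]`. Hence the number
`A` of independent sets and `E` satisfy `A (m + 1) = A m + A (m - h)` and
`E (m + 1) = E m + E (m - h) + A (m - h)`, so `A m = F (m + h + 1)`, and the recurrence
`F (k + 1) = F k + F (k - h)` (for `h < k`) turns the convolution `∑ F i * F (n - i + 1)` into
a solution of the same recurrence as `E`. -/

/-- Independent subsets of the h-th power of the path on n vertices:
subsets of {1,...,n} with all pairwise differences of distinct elements greater than h. -/
def pathSubsets (n h : ℕ) : Finset (Finset ℕ) :=
  (Finset.Icc 1 n).powerset.filter (fun S => ∀ i ∈ S, ∀ j ∈ S, i < j → i + h < j)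

def pathCount (n h k : ℕ) : ℕ := ((pathSubsets n h).filter (fun S => S.card = k)).card

def pathTotal (n h : ℕ) : ℕ := (pathSubsets n h).card

/-- Independent subsets of the h-th power of the cycle on n vertices:
subsets S of {1,...,n} with h < |i-j| < n-h for all distinct i,j ∈ S. -/
def cycleSubsets (n h : ℕ) : Finset (Finset ℕ) :=
  (Finset.Icc 1 n).powerset.filter
    (fun S => ∀ i ∈ S, ∀ j ∈ S, i < j → i + h < j ∧ j + h < n + i)

def cycleCount (n h k : ℕ) : ℕ := ((cycleSubsets n h).filter (fun S => S.card = k)).card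

def cycleTotal (n h : ℕ) : ℕ := (cycleSubsets n h).card

/-- Number of edges of the Hasse diagram of independent subsets of Pₙ⁽ʰ⁾ ordered by inclusion. -/
def pathEdges (n h : ℕ) : ℕ :=
  (((pathSubsets n h) ×ˢ (pathSubsets n h)).filter
    (fun p => p.1 ⊆ p.2 ∧ p.2.card = p.1.card + 1)).card

/-- Number of edges of the Hasse diagram of independent subsets of Cₙ⁽ʰ⁾ ordered by inclusion. -/
def cycleEdges (n h : ℕ) : ℕ :=
  (((cycleSubsets n h) ×ˢ (cycleSubsets n h)).filter
    (fun p => p.1 ⊆ p.2 ∧ p.2.card = p.1.card + 1)).card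

open Finset

theorem card_filter_powerset_card_add_one_eq {α : Type*} (T : Finset α) :
    #{S ∈ T.powerset | #S + 1 = #T} = #T := by
  rcases hT : #T with _ | k
  · simp
  · simp only [Nat.add_right_cancel_iff]
    rw [← powersetCard_eq_filter, card_powersetCard, hT, Nat.choose_succ_self_right]

theorem card_hasse_edges_eq_sum_card {α : Type*} [DecidableEq α] {𝒜 : Finset (Finset α)}
    (h𝒜 : IsLowerSet (𝒜 : Set (Finset α))) :
    #{p ∈ 𝒜 ×ˢ 𝒜 | p.1 ⊆ p.2 ∧ #p.2 = #p.1 + 1} = ∑ T ∈ 𝒜, #T := by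
  rw [card_filter, sum_product, sum_comm]
  refine sum_congr rfl fun T hT => ?_
  rw [← card_filter, ← card_filter_powerset_card_add_one_eq T]
  congr 1
  ext S
  simp only [mem_filter, mem_powerset]
  exact ⟨fun ⟨_, hST, hcard⟩ => ⟨hST, hcard.symm⟩,
    fun ⟨hST, hcard⟩ => ⟨h𝒜 hST hT, hST, hcard.symm⟩⟩

theorem mem_pathSubsets {n h : ℕ} {S : Finset ℕ} :
    S ∈ pathSubsets n h ↔ S ⊆ Icc 1 n ∧ ∀ i ∈ S, ∀ j ∈ S, i < j → i + h < j := by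
  simp [pathSubsets]

theorem isLowerSet_pathSubsets (n h : ℕ) : IsLowerSet (pathSubsets n h : Set (Finset ℕ)) :=
  fun _ _ hST hT => by
    simp only [mem_coe, mem_pathSubsets] at *
    exact ⟨hST.trans hT.1, fun i hi j hj => hT.2 i (hST hi) j (hST hj)⟩

theorem pathEdges_eq_sum_card (n h : ℕ) : pathEdges n h = ∑ T ∈ pathSubsets n h, #T :=
  card_hasse_edges_eq_sum_card (isLowerSet_pathSubsets n h)

theorem mem_Icc_of_mem_pathSubsets {n h i : ℕ} {T : Finset ℕ} (hT : T ∈ pathSubsets n h)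
    (hi : i ∈ T) : i ∈ Icc 1 n :=
  (mem_pathSubsets.1 hT).1 hi

theorem filter_notMem_pathSubsets_succ (m h : ℕ) :
    {T ∈ pathSubsets (m + 1) h | m + 1 ∉ T} = pathSubsets m h := by
  ext T
  simp only [mem_filter, mem_pathSubsets, subset_iff, mem_Icc]
  constructor
  · rintro ⟨⟨hsub, hind⟩, hT⟩
    refine ⟨fun x hx => ?_, hind⟩
    have := hsub hx
    have : x ≠ m + 1 := by rintro rfl; exact hT hx
    omega
  · rintro ⟨hsub, hind⟩
    refine ⟨⟨fun x hx => ?_, hind⟩, fun hT => ?_⟩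
    · have := hsub hx; omega
    · have := hsub hT; omega

theorem filter_mem_pathSubsets_succ (m h : ℕ) :
    {T ∈ pathSubsets (m + 1) h | m + 1 ∈ T} = (pathSubsets (m - h) h).image (insert (m + 1)) := by
  ext T
  simp only [mem_filter, mem_image]
  constructor
  · rintro ⟨hT, hmT⟩
    refine ⟨T.erase (m + 1), ?_, insert_erase hmT⟩
    obtain ⟨hsub, hind⟩ := mem_pathSubsets.1 hT
    refine mem_pathSubsets.2 ⟨fun x hx => ?_, fun i hi j hj => hind i (mem_of_mem_erase hi) j
      (mem_of_mem_erase hj)⟩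
    obtain ⟨hxm, hxT⟩ := mem_erase.1 hx
    have := mem_Icc.1 <| mem_Icc_of_mem_pathSubsets hT hxT
    have := hind x hxT (m + 1) hmT (by omega)
    exact mem_Icc.2 (by omega)
  · rintro ⟨S, hS, rfl⟩
    have hS' : ∀ x ∈ S, 1 ≤ x ∧ x + h ≤ m := fun x hx => by
      have := mem_Icc.1 <| mem_Icc_of_mem_pathSubsets hS hx; omega
    refine ⟨mem_pathSubsets.2 ⟨insert_subset (mem_Icc.2 (by omega)) fun x hx => ?_, ?_⟩,
      mem_insert_self _ _⟩
    · have := hS' x hx; exact mem_Icc.2 (by omega)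
    · simp only [forall_mem_insert]
      refine ⟨⟨by omega, fun j hj _ => by have := hS' j hj; omega⟩,
        fun i hi => ⟨fun _ => by have := hS' i hi; omega, (mem_pathSubsets.1 hS).2 i hi⟩⟩

theorem sum_pathSubsets_succ {M : Type*} [AddCommMonoid M] (m h : ℕ) (f : Finset ℕ → M) :
    ∑ T ∈ pathSubsets (m + 1) h, f T =
      ∑ T ∈ pathSubsets m h, f T + ∑ T ∈ pathSubsets (m - h) h, f (insert (m + 1) T) := by
  rw [← sum_filter_not_add_sum_filter _ (m + 1 ∈ ·), filter_notMem_pathSubsets_succ,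
    filter_mem_pathSubsets_succ, sum_image]
  intro S hS S' hS' hSS'
  have hm : ∀ S ∈ pathSubsets (m - h) h, m + 1 ∉ S := fun S hS hmS => by
    have := mem_Icc.1 <| mem_Icc_of_mem_pathSubsets hS hmS; omega
  rw [← erase_insert (hm S hS), hSS', erase_insert (hm S' hS')]

theorem pathSubsets_zero (h : ℕ) : pathSubsets 0 h = {∅} := by
  ext S
  simp +contextual [mem_pathSubsets, subset_empty]

theorem pathTotal_zero (h : ℕ) : pathTotal 0 h = 1 := by
  simp [pathTotal, pathSubsets_zero]

theorem pathEdges_zero (h : ℕ) : pathEdges 0 h = 0 := by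
  simp [pathEdges_eq_sum_card, pathSubsets_zero]

theorem pathTotal_succ (m h : ℕ) : pathTotal (m + 1) h = pathTotal m h + pathTotal (m - h) h := by
  simp only [pathTotal, card_eq_sum_ones, sum_pathSubsets_succ m h (fun _ => 1)]

theorem pathEdges_succ (m h : ℕ) :
    pathEdges (m + 1) h = pathEdges m h + pathEdges (m - h) h + pathTotal (m - h) h := by
  rw [pathEdges_eq_sum_card, sum_pathSubsets_succ, pathEdges_eq_sum_card, pathEdges_eq_sum_card,
    pathTotal, card_eq_sum_ones, add_assoc, ← sum_add_distrib]
  congr 1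
  refine sum_congr rfl fun T hT => card_insert_of_notMem fun hmT => ?_
  have := mem_Icc.1 <| mem_Icc_of_mem_pathSubsets hT hmT
  omega

structure IsHFibonacci (h : ℕ) (F : ℕ → ℕ) : Prop where
  eq_one : ∀ m, 1 ≤ m → m ≤ h + 1 → F m = 1
  eq_add : ∀ m, m > h + 1 → F m = F (m - 1) + F (m - h - 1)

def selfConvolution (F : ℕ → ℕ) (n : ℕ) : ℕ := ∑ i ∈ Icc 1 n, F i * F (n - i + 1)

namespace IsHFibonacci

variable {h : ℕ} {F : ℕ → ℕ}

theorem succ_eq (hF : IsHFibonacci h F) {k : ℕ} (hk : 1 ≤ k) :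
    F (k + 1) = F k + if h < k then F (k - h) else 0 := by
  split_ifs with hhk
  · rw [hF.eq_add (k + 1) (by omega), Nat.add_sub_cancel, Nat.sub_right_comm, Nat.add_sub_cancel]
  · rw [hF.eq_one k hk (by omega), hF.eq_one (k + 1) (by omega) (by omega)]

theorem sub_add_succ (hF : IsHFibonacci h F) (m : ℕ) : F (m - h + h + 1) = F (m + 1) := by
  rcases le_total m h with hmh | hhm
  · rw [hF.eq_one _ (by omega) (by omega), hF.eq_one _ (by omega) (by omega)]
  · rw [Nat.sub_add_cancel hhm]

theorem selfConvolution_succ (hF : IsHFibonacci h F) (m : ℕ) :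
    selfConvolution F (m + 1) = selfConvolution F m + selfConvolution F (m - h) + F (m + 1) := by
  have hterm : ∀ i ∈ Icc 1 m, F i * F (m + 1 - i + 1) =
      F i * F (m - i + 1) + if i ≤ m - h then F i * F (m - h - i + 1) else 0 := by
    intro i hi
    have hi := mem_Icc.1 hi
    rw [show m + 1 - i + 1 = m - i + 1 + 1 by omega, hF.succ_eq (by omega), mul_add]
    by_cases hih : i ≤ m - h
    · rw [if_pos (by omega), if_pos hih, show m - i + 1 - h = m - h - i + 1 by omega]
    · rw [if_neg (by omega), if_neg hih, mul_zero]
  have hrange : {i ∈ Icc 1 m | i ≤ m - h} = Icc 1 (m - h) := by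
    ext i
    simp only [mem_filter, mem_Icc]
    omega
  rw [selfConvolution, sum_Icc_succ_top (by omega), sum_congr rfl hterm, sum_add_distrib,
    ← sum_filter, hrange, Nat.sub_self, hF.eq_one 1 le_rfl (by omega), mul_one]
  rfl

theorem pathTotal_eq (hF : IsHFibonacci h F) (m : ℕ) : pathTotal m h = F (m + h + 1) := by
  induction m using Nat.strong_induction_on with
  | _ m ih =>
    rcases m with _ | m
    · rw [pathTotal_zero, hF.eq_one _ (by omega) (by omega)]
    · rw [pathTotal_succ, ih m (by omega), ih (m - h) (by omega), hF.sub_add_succ,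
        hF.eq_add (m + 1 + h + 1) (by omega)]
      congr 2 <;> omega

theorem pathEdges_eq_selfConvolution (hF : IsHFibonacci h F) (n : ℕ) :
    pathEdges n h = selfConvolution F n := by
  induction n using Nat.strong_induction_on with
  | _ n ih =>
    rcases n with _ | m
    · simp [pathEdges_zero, selfConvolution]
    · rw [pathEdges_succ, ih m (by omega), ih (m - h) (by omega), hF.pathTotal_eq,
        hF.sub_add_succ, hF.selfConvolution_succ]

end IsHFibonacci

theorem stmt10 (n h : ℕ) (F : ℕ → ℕ)
    (hF1 : ∀ m, 1 ≤ m → m ≤ h + 1 → F m = 1)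
    (hFrec : ∀ m, m > h + 1 → F m = F (m - 1) + F (m - h - 1)) :
    pathEdges n h = ∑ i ∈ Finset.Icc 1 n, F i * F (n - i + 1) :=
  IsHFibonacci.pathEdges_eq_selfConvolution ⟨hF1, hFrec⟩ n
end

section
/- For any fixed vertex of the h-th power of a cycle on n vertices with n > 2h, the number of independent k-subsets containing that vertex equals C(n - h*k - 1, k - 1) for k ≥ 1. -/
def PathFar (h u v : ℕ) : Prop := (u < v → u + h < v) ∧ (v < u → v + h < u)

theorem mem_pathSubsets_s14 {n h : ℕ} {S : Finset ℕ} :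
    S ∈ pathSubsets n h ↔ (∀ x ∈ S, 1 ≤ x ∧ x ≤ n) ∧ ∀ x ∈ S, ∀ y ∈ S, PathFar h x y := by
  simp only [pathSubsets, Finset.mem_filter, Finset.mem_powerset, Finset.subset_iff,
    Finset.mem_Icc, PathFar]
  exact and_congr_right fun _ =>
    ⟨fun hS x hx y hy => ⟨hS x hx y hy, hS y hy x hx⟩, fun hS x hx y hy => (hS x hx y hy).1⟩

theorem pathCount_zero_right (N h : ℕ) : pathCount N h 0 = 1 := by
  rw [pathCount, Finset.card_eq_one]
  exact ⟨∅, by ext S; simp only [Finset.mem_filter, Finset.card_eq_zero, Finset.mem_singleton,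
    mem_pathSubsets_s14]; aesop⟩

theorem pathCount_zero_succ (h m : ℕ) : pathCount 0 h (m + 1) = 0 := by
  rw [pathCount, Finset.card_eq_zero, Finset.filter_eq_empty_iff]
  intro S hS hcard
  obtain ⟨x, hx⟩ := Finset.card_pos.mp (by omega : 0 < S.card)
  have := (mem_pathSubsets_s14.mp hS).1 x hx
  omega

theorem insert_mem_pathSubsets {N h : ℕ} {V : Finset ℕ} (hV : V ∈ pathSubsets (N - h) h) :
    insert (N + 1) V ∈ pathSubsets (N + 1) h := by
  rw [mem_pathSubsets_s14] at hV ⊢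
  obtain ⟨hrange, hsep⟩ := hV
  simp only [Finset.mem_insert, forall_eq_or_imp, PathFar] at hsep ⊢
  grind

theorem erase_mem_pathSubsets {N h : ℕ} {S : Finset ℕ} (hS : S ∈ pathSubsets (N + 1) h)
    (hN : N + 1 ∈ S) : S.erase (N + 1) ∈ pathSubsets (N - h) h := by
  rw [mem_pathSubsets_s14] at hS ⊢
  obtain ⟨hrange, hsep⟩ := hS
  refine ⟨fun x hx => ?_, fun x hx y hy => hsep x (Finset.mem_of_mem_erase hx) y
    (Finset.mem_of_mem_erase hy)⟩
  obtain ⟨hne, hx⟩ := Finset.mem_erase.mp hx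
  have := hrange x hx
  have := (hsep x hx (N + 1) hN).1 (by omega)
  omega

theorem pathCount_succ_succ (N h m : ℕ) :
    pathCount (N + 1) h (m + 1) = pathCount N h (m + 1) + pathCount (N - h) h m := by
  set F := (pathSubsets (N + 1) h).filter (fun S => S.card = m + 1)
  have hout : F.filter (N + 1 ∉ ·) = (pathSubsets N h).filter (fun S => S.card = m + 1) := by
    ext S
    simp only [F, Finset.mem_filter, mem_pathSubsets_s14]
    grind
  have hin : (F.filter (N + 1 ∈ ·)).card = pathCount (N - h) h m := by
    apply Finset.card_nbij' (·.erase (N + 1)) (insert (N + 1))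
    · intro S hS
      simp only [F, Finset.mem_coe, Finset.mem_filter] at hS ⊢
      obtain ⟨⟨hS, hcard⟩, hN⟩ := hS
      exact ⟨erase_mem_pathSubsets hS hN, by rw [Finset.card_erase_of_mem hN, hcard]; rfl⟩
    · intro V hV
      simp only [F, Finset.mem_coe, Finset.mem_filter] at hV ⊢
      obtain ⟨hV, hcard⟩ := hV
      have hN : N + 1 ∉ V := fun hN => by have := (mem_pathSubsets_s14.mp hV).1 _ hN; omega
      exact ⟨⟨insert_mem_pathSubsets hV, by rw [Finset.card_insert_of_notMem hN, hcard]⟩,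
        Finset.mem_insert_self _ _⟩
    · intro S hS
      exact Finset.insert_erase (Finset.mem_filter.mp hS).2
    · intro V hV
      simp only [Finset.mem_coe, Finset.mem_filter, mem_pathSubsets_s14] at hV
      exact Finset.erase_insert fun hN => by have := hV.1.1 _ hN; omega
  rw [pathCount, ← Finset.card_filter_add_card_filter_not (p := (N + 1 ∈ ·)), hin, hout,
    add_comm]
  rfl

theorem Nat.choose_succ_sub_add_two (N a j : ℕ) :
    (N + 1 - a).choose (j + 2) = (N - a).choose (j + 2) + (N - a).choose (j + 1) := by
  rcases le_or_gt a N with ha | ha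
  · rw [show N + 1 - a = N - a + 1 by omega, Nat.choose_succ_succ', add_comm]
  · simp [show N + 1 - a = 0 by omega, show N - a = 0 by omega]

theorem pathCount_eq_choose (N h m : ℕ) : pathCount N h m = (N - (m - 1) * h).choose m := by
  induction N using Nat.strong_induction_on generalizing m with
  | _ N ih =>
  rcases m with _ | m
  · simp [pathCount_zero_right]
  rcases N with _ | N
  · simp [pathCount_zero_succ]
  rw [pathCount_succ_succ, ih N (by omega), ih (N - h) (by omega)]
  rcases m with _ | j
  · simp
  · rw [show N - h - (j + 1 - 1) * h = N - (j + 1) * h by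
      rw [Nat.add_sub_cancel, add_mul, one_mul]; omega]
    exact (Nat.choose_succ_sub_add_two N _ j).symm

-- `x = y`, or the cyclic distance between `x` and `y` in `{1, …, n}` exceeds `h`.
def CycleFar (n h x y : ℕ) : Prop :=
  (x < y → x + h < y ∧ y + h < n + x) ∧ (y < x → y + h < x ∧ x + h < n + y)

theorem CycleFar.refl (n h x : ℕ) : CycleFar n h x x := by
  simp [CycleFar]

theorem CycleFar.symm {n h x y : ℕ} (hxy : CycleFar n h x y) : CycleFar n h y x :=
  And.symm hxy

theorem mem_cycleSubsets {n h : ℕ} {S : Finset ℕ} :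
    S ∈ cycleSubsets n h ↔
      (∀ x ∈ S, 1 ≤ x ∧ x ≤ n) ∧ ∀ x ∈ S, ∀ y ∈ S, CycleFar n h x y := by
  simp only [cycleSubsets, Finset.mem_filter, Finset.mem_powerset, Finset.subset_iff,
    Finset.mem_Icc, CycleFar]
  exact and_congr_right fun _ =>
    ⟨fun hS x hx y hy => ⟨hS x hx y hy, hS y hy x hx⟩, fun hS x hx y hy => (hS x hx y hy).1⟩

def cycleToPath (n h i x : ℕ) : ℕ := if i < x then x - i - h else x + n - i - h

def pathToCycle (n h i v : ℕ) : ℕ := if v + h + i ≤ n then v + h + i else v + h + i - n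

section
variable {n h i : ℕ}

theorem cycleToPath_spec {x : ℕ} (hx : 1 ≤ x ∧ x ≤ n) (hxi : x ≠ i) (hfar : CycleFar n h i x) :
    (1 ≤ cycleToPath n h i x ∧ cycleToPath n h i x ≤ n - 2 * h - 1) ∧
      pathToCycle n h i (cycleToPath n h i x) = x := by
  unfold cycleToPath pathToCycle CycleFar at *
  split_ifs <;> omega

theorem pathToCycle_spec {v : ℕ} (hi : i ≤ n) (hv : 1 ≤ v ∧ v ≤ n - 2 * h - 1) :
    (1 ≤ pathToCycle n h i v ∧ pathToCycle n h i v ≤ n) ∧ pathToCycle n h i v ≠ i ∧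
      CycleFar n h i (pathToCycle n h i v) ∧ cycleToPath n h i (pathToCycle n h i v) = v := by
  unfold cycleToPath pathToCycle CycleFar
  split_ifs <;> omega

theorem cycleFar_iff_pathFar {x y : ℕ} (hx : 1 ≤ x ∧ x ≤ n) (hy : 1 ≤ y ∧ y ≤ n)
    (hix : CycleFar n h i x) (hiy : CycleFar n h i y) :
    CycleFar n h x y ↔ PathFar h (cycleToPath n h i x) (cycleToPath n h i y) := by
  unfold cycleToPath CycleFar PathFar at *
  split_ifs <;> omega

theorem image_cycleToPath_mem_pathSubsets {S : Finset ℕ} (hS : S ∈ cycleSubsets n h)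
    (hiS : i ∈ S) :
    (S.erase i).image (cycleToPath n h i) ∈ pathSubsets (n - 2 * h - 1) h := by
  obtain ⟨hrange, hfar⟩ := mem_cycleSubsets.mp hS
  simp only [mem_pathSubsets_s14, Finset.forall_mem_image, Finset.mem_erase]
  exact ⟨fun x ⟨hxi, hx⟩ => (cycleToPath_spec (hrange x hx) hxi (hfar i hiS x hx)).1,
    fun x ⟨_, hx⟩ y ⟨_, hy⟩ => (cycleFar_iff_pathFar (hrange x hx) (hrange y hy)
      (hfar i hiS x hx) (hfar i hiS y hy)).1 (hfar x hx y hy)⟩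

theorem insert_image_pathToCycle_mem_cycleSubsets (hi : 1 ≤ i ∧ i ≤ n) {V : Finset ℕ}
    (hV : V ∈ pathSubsets (n - 2 * h - 1) h) :
    insert i (V.image (pathToCycle n h i)) ∈ cycleSubsets n h := by
  obtain ⟨hrange, hfar⟩ := mem_pathSubsets_s14.mp hV
  simp only [mem_cycleSubsets, Finset.forall_mem_insert, Finset.forall_mem_image]
  have hψ := fun v hv => pathToCycle_spec hi.2 (hrange v hv)
  refine ⟨⟨hi, fun v hv => (hψ v hv).1⟩, ⟨CycleFar.refl n h i, fun v hv => (hψ v hv).2.2.1⟩,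
    fun u hu => ⟨(hψ u hu).2.2.1.symm, fun v hv => ?_⟩⟩
  rw [cycleFar_iff_pathFar (hψ u hu).1 (hψ v hv).1 (hψ u hu).2.2.1 (hψ v hv).2.2.1,
    (hψ u hu).2.2.2, (hψ v hv).2.2.2]
  exact hfar u hu v hv

theorem leftInvOn_cycleToPath {S : Finset ℕ} (hS : S ∈ cycleSubsets n h) (hiS : i ∈ S) :
    Set.LeftInvOn (pathToCycle n h i) (cycleToPath n h i) ↑(S.erase i) := by
  obtain ⟨hrange, hfar⟩ := mem_cycleSubsets.mp hS
  intro x hx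
  obtain ⟨hxi, hx⟩ := Finset.mem_erase.mp hx
  exact (cycleToPath_spec (hrange x hx) hxi (hfar i hiS x hx)).2

theorem leftInvOn_pathToCycle (hi : i ≤ n) {V : Finset ℕ}
    (hV : V ∈ pathSubsets (n - 2 * h - 1) h) :
    Set.LeftInvOn (cycleToPath n h i) (pathToCycle n h i) ↑V :=
  fun v hv => (pathToCycle_spec hi ((mem_pathSubsets_s14.mp hV).1 v hv)).2.2.2

theorem notMem_image_pathToCycle (hi : i ≤ n) {V : Finset ℕ}
    (hV : V ∈ pathSubsets (n - 2 * h - 1) h) : i ∉ V.image (pathToCycle n h i) := by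
  rw [Finset.mem_image]
  rintro ⟨v, hv, hvi⟩
  exact (pathToCycle_spec hi ((mem_pathSubsets_s14.mp hV).1 v hv)).2.1 hvi

theorem card_cycleSubsets_mem_eq_pathCount (hi : 1 ≤ i ∧ i ≤ n) {k : ℕ} (hk : 1 ≤ k) :
    ((cycleSubsets n h).filter (fun S => S.card = k ∧ i ∈ S)).card =
      pathCount (n - 2 * h - 1) h (k - 1) := by
  apply Finset.card_nbij' (fun S => (S.erase i).image (cycleToPath n h i))
    (fun V => insert i (V.image (pathToCycle n h i)))
  · intro S hS
    simp only [Finset.mem_coe, Finset.mem_filter] at hS ⊢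
    obtain ⟨hS, hcard, hiS⟩ := hS
    refine ⟨image_cycleToPath_mem_pathSubsets hS hiS, ?_⟩
    rw [Finset.card_image_of_injOn (leftInvOn_cycleToPath hS hiS).injOn,
      Finset.card_erase_of_mem hiS, hcard]
  · intro V hV
    simp only [Finset.mem_coe, Finset.mem_filter] at hV ⊢
    obtain ⟨hV, hcard⟩ := hV
    refine ⟨insert_image_pathToCycle_mem_cycleSubsets hi hV, ?_, Finset.mem_insert_self _ _⟩
    rw [Finset.card_insert_of_notMem (notMem_image_pathToCycle hi.2 hV),
      Finset.card_image_of_injOn (leftInvOn_pathToCycle hi.2 hV).injOn, hcard]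
    omega
  · intro S hS
    simp only [Finset.mem_coe, Finset.mem_filter] at hS
    obtain ⟨hS, -, hiS⟩ := hS
    dsimp only
    rw [Finset.image_image, Finset.image_congr (leftInvOn_cycleToPath hS hiS).eqOn,
      Finset.image_id, Finset.insert_erase hiS]
  · intro V hV
    simp only [Finset.mem_coe, Finset.mem_filter] at hV
    dsimp only
    rw [Finset.erase_insert (notMem_image_pathToCycle hi.2 hV.1), Finset.image_image,
      Finset.image_congr (leftInvOn_pathToCycle hi.2 hV.1).eqOn, Finset.image_id]

end

theorem stmt14_general (n h k i : ℕ) (hk : 1 ≤ k) (hi1 : 1 ≤ i) (hi2 : i ≤ n) :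
    ((cycleSubsets n h).filter (fun S => S.card = k ∧ i ∈ S)).card
      = Nat.choose (n - h * k - 1) (k - 1) := by
  rw [card_cycleSubsets_mem_eq_pathCount ⟨hi1, hi2⟩ hk, pathCount_eq_choose]
  rcases k with _ | _ | j
  · omega
  · simp
  · congr 1
    rw [Nat.add_sub_cancel, Nat.add_sub_cancel, mul_add, mul_add, mul_comm h j]
    omega

theorem stmt14 (n h k i : ℕ) (hn : 2 * h < n) (hk : 1 ≤ k) (hi1 : 1 ≤ i) (hi2 : i ≤ n) :
    ((cycleSubsets n h).filter (fun S => S.card = k ∧ i ∈ S)).card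
      = Nat.choose (n - h * k - 1) (k - 1) :=
  stmt14_general n h k i hk hi1 hi2
end
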